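/- For a bounded random variable X, α ∈ (0,1), and any probability density f ≥ 0 with E[f] = 1 and relative entropy E[f log f] ≤ -log α, one has E[-fX] ≤ EVaR_α(X). (One direction of the dual/robust representation, following from the Donsker–Varadhan variational inequality E[f·(-sX)] ≤ log E[exp(-sX)] + E[f log f].) -/

import Mathlib

open MeasureTheory Real

noncomputable def EVaR {Ω : Type*} [MeasurableSpace Ω] (μ : Measure Ω) (X : Ω → ℝ)
    (α : ℝ) : ℝ :=
  sInf ((fun s : ℝ => (Real.log (∫ ω, Real.exp (-s * X ω) ∂μ) - Real.log α) / s) '' Set.Ioi 0)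

/-!
For every `s > 0`, the Donsker–Varadhan inequality with `g = -s X` gives
`-s E[f X] ≤ E[f log f] + log E[exp (-s X)] ≤ log E[exp (-s X)] - log α`; dividing by `s`
shows that `E[-f X]` is a lower bound of the set whose infimum defines `EVaR`.
-/

/-- Fenchel–Young inequality for the conjugate pair `a log a - a` and `exp`. -/
lemma mul_le_mul_log_sub_add_exp {a : ℝ} (ha : 0 ≤ a) (b : ℝ) :
    a * b ≤ a * log a - a + exp b := by
  rcases ha.eq_or_lt with rfl | ha
  · simp [(exp_pos b).le]
  · have h := mul_le_mul_of_nonneg_left (add_one_le_exp (b - log a)) ha.le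
    rw [exp_sub, exp_log ha, mul_div_cancel₀ _ ha.ne'] at h
    linarith

section

variable {Ω : Type*} [MeasurableSpace Ω] {μ : Measure Ω}

/-- Donsker–Varadhan: integrate the Fenchel–Young inequality at `b = g ω - log ∫ exp g`. -/
theorem integral_mul_le_integral_mul_log_add_log_integral_exp {f g : Ω → ℝ}
    (hf_nonneg : ∀ᵐ ω ∂μ, 0 ≤ f ω) (hf : Integrable f μ) (hf_one : ∫ ω, f ω ∂μ = 1)
    (hf_log : Integrable (fun ω ↦ f ω * log (f ω)) μ)
    (hfg : Integrable (fun ω ↦ f ω * g ω) μ) (hg_exp : Integrable (fun ω ↦ exp (g ω)) μ) :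
    ∫ ω, f ω * g ω ∂μ ≤ ∫ ω, f ω * log (f ω) ∂μ + log (∫ ω, exp (g ω) ∂μ) := by
  have : NeZero μ := ⟨by rintro rfl; simp at hf_one⟩
  set Z := ∫ ω, exp (g ω) ∂μ
  have hZ : 0 < Z := integral_exp_pos hg_exp
  have hpointwise : ∀ᵐ ω ∂μ,
      f ω * g ω - log Z * f ω ≤ f ω * log (f ω) - f ω + exp (g ω) / Z := by
    filter_upwards [hf_nonneg] with ω hω
    have := mul_le_mul_log_sub_add_exp hω (g ω - log Z)
    rwa [exp_sub, exp_log hZ, mul_sub, mul_comm (f ω) (log Z)] at this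
  have hf_log_sub : Integrable (fun ω ↦ f ω * log (f ω) - f ω) μ := hf_log.sub hf
  have hint : ∫ ω, f ω * g ω - log Z * f ω ∂μ ≤
      ∫ ω, f ω * log (f ω) - f ω + exp (g ω) / Z ∂μ :=
    integral_mono_ae (hfg.sub (hf.const_mul _)) (hf_log_sub.add (hg_exp.div_const Z)) hpointwise
  rw [integral_sub hfg (hf.const_mul _), integral_const_mul,
    integral_add hf_log_sub (hg_exp.div_const Z), integral_sub hf_log hf, integral_div,
    hf_one, div_self hZ.ne'] at hint
  linarith

lemma integrable_exp_mul_of_abs_le [IsFiniteMeasure μ] {X : Ω → ℝ}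
    (hX : AEStronglyMeasurable X μ) {C : ℝ} (hXC : ∀ᵐ ω ∂μ, |X ω| ≤ C) (t : ℝ) :
    Integrable (fun ω ↦ exp (t * X ω)) μ := by
  refine .of_bound (continuous_exp.comp_aestronglyMeasurable (hX.const_mul t)) (exp (|t| * C)) ?_
  filter_upwards [hXC] with ω hω
  rw [norm_of_nonneg (exp_pos _).le, exp_le_exp]
  calc t * X ω ≤ |t * X ω| := le_abs_self _
    _ = |t| * |X ω| := abs_mul t (X ω)
    _ ≤ |t| * C := mul_le_mul_of_nonneg_left hω (abs_nonneg t)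

end

theorem evar_dual_upper_bound_general {Ω : Type*} [MeasurableSpace Ω] (μ : Measure Ω)
    [IsProbabilityMeasure μ] (X : Ω → ℝ) (hX : Measurable X)
    (C : ℝ) (hXb : ∀ ω, |X ω| ≤ C)
    (f : Ω → ℝ) (hf0 : ∀ ω, 0 ≤ f ω)
    (hf1 : Integrable f μ) (hfmean : ∫ ω, f ω ∂μ = 1)
    (hent_int : Integrable (fun ω => f ω * Real.log (f ω)) μ)
    (α : ℝ)
    (hent : ∫ ω, f ω * Real.log (f ω) ∂μ ≤ -Real.log α) :
    (∫ ω, -(f ω * X ω) ∂μ) ≤ EVaR μ X α := by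
  refine le_csInf ⟨_, 1, Set.mem_Ioi.2 one_pos, rfl⟩ ?_
  rintro _ ⟨s, hs, rfl⟩
  have hfX : Integrable (fun ω ↦ f ω * X ω) μ :=
    hf1.mul_bdd hX.aestronglyMeasurable (ae_of_all _ fun ω ↦ (norm_eq_abs _).trans_le (hXb ω))
  have hDV := integral_mul_le_integral_mul_log_add_log_integral_exp (g := fun ω ↦ -s * X ω)
    (ae_of_all _ hf0) hf1 hfmean hent_int (by simpa only [mul_left_comm] using hfX.const_mul (-s))
    (integrable_exp_mul_of_abs_le hX.aestronglyMeasurable (ae_of_all _ hXb) (-s))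
  simp only [mul_left_comm (f _), integral_const_mul] at hDV
  rw [integral_neg, le_div_iff₀ hs]
  linarith

theorem evar_dual_upper_bound {Ω : Type*} [MeasurableSpace Ω] (μ : Measure Ω)
    [IsProbabilityMeasure μ] (X : Ω → ℝ) (hX : Measurable X)
    (C : ℝ) (hXb : ∀ ω, |X ω| ≤ C)
    (f : Ω → ℝ) (hf : Measurable f) (hf0 : ∀ ω, 0 ≤ f ω)
    (hf1 : Integrable f μ) (hfmean : ∫ ω, f ω ∂μ = 1)
    (hent_int : Integrable (fun ω => f ω * Real.log (f ω)) μ)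
    (α : ℝ) (hα : α ∈ Set.Ioo (0 : ℝ) 1)
    (hent : ∫ ω, f ω * Real.log (f ω) ∂μ ≤ -Real.log α) :
    (∫ ω, -(f ω * X ω) ∂μ) ≤ EVaR μ X α :=
  evar_dual_upper_bound_general μ X hX C hXb f hf0 hf1 hfmean hent_int α hent
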